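/- arXiv:2511.17783 — 5 statements merged into one kernel-verified Lean document; each statement's English description precedes it below -/
import Mathlib

section
/- For all positive reals a and b, KL(a,b) ≥ min( (a−b)²/(6b), |a−b| ), where KL(a,b) = a·log(a/b) − (a−b). -/
/-!
With `x = a / b`, the bound `KL a b ≥ 3 (a - b)² / (2 (a + 2 b))` is a rational lower bound
for `log x`, which follows from a sign analysis of one derivative. The right-hand side is at
least `(a - b)² / (6 b)` when `a ≤ 7 b` and at least `a - b` when `a ≥ 7 b`.
-/

noncomputable def KL (a b : ℝ) : ℝ := a * Real.log (a / b) - (a - b)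

open Real Set

lemma hasDerivAt_log_add_inv_add_inv {x : ℝ} (hx : 0 < x) :
    HasDerivAt (fun t => log t + 1 / (4 * t) + 27 / (4 * (t + 2)))
      ((x - 1) ^ 3 / (x ^ 2 * (x + 2) ^ 2)) x := by
  have h := ((hasDerivAt_log hx.ne').fun_add
    ((hasDerivAt_const x 1).fun_div ((hasDerivAt_id' x).const_mul 4) (by positivity))).fun_add
    ((hasDerivAt_const x 27).fun_div (((hasDerivAt_id' x).add_const 2).const_mul 4) (by positivity))
  refine h.congr_deriv ?_
  field_simp
  ring

/-- Tangent to `log` to third order at `x = 1`: the difference is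
`log x + 1 / (4 x) + 27 / (4 (x + 2)) - 5 / 2`, which is minimal at `1`. -/
theorem sub_one_mul_div_le_log {x : ℝ} (hx : 0 < x) :
    (x - 1) * (5 * x + 1) / (2 * x * (x + 2)) ≤ log x := by
  set F : ℝ → ℝ := fun t => log t + 1 / (4 * t) + 27 / (4 * (t + 2))
  have hF : ∀ t ∈ Ioi (0 : ℝ), HasDerivAt F ((t - 1) ^ 3 / (t ^ 2 * (t + 2) ^ 2)) t :=
    fun t ht => hasDerivAt_log_add_inv_add_inv ht
  have hcont : ContinuousOn F (Ioi 0) := fun t ht => (hF t ht).continuousAt.continuousWithinAt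
  have hF1 : F 1 = 5 / 2 := by norm_num [F]
  suffices F 1 ≤ F x by
    simp only [F, hF1] at this
    rw [div_le_iff₀ (by positivity)]
    field_simp at this
    nlinarith [this]
  rcases le_total 1 x with h1x | hx1
  · refine monotoneOn_of_hasDerivWithinAt_nonneg (convex_Ici 1)
      (hcont.mono fun t (ht : 1 ≤ t) => one_pos.trans_le ht)
      (fun t ht => (hF t ?_).hasDerivWithinAt) (fun t ht => ?_) self_mem_Ici h1x h1x
    · rw [interior_Ici] at ht; exact one_pos.trans (mem_Ioi.mp ht)
    · rw [interior_Ici] at ht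
      have : 0 ≤ t - 1 := by linarith [mem_Ioi.mp ht]
      positivity
  · refine antitoneOn_of_hasDerivWithinAt_nonpos (convex_Ioc 0 1)
      (hcont.mono Ioc_subset_Ioi_self)
      (fun t ht => (hF t ?_).hasDerivWithinAt) (fun t ht => ?_)
      ⟨hx, hx1⟩ (right_mem_Ioc.2 one_pos) hx1
    · rw [interior_Ioc] at ht; exact ht.1
    · rw [interior_Ioc] at ht
      have : t - 1 ≤ 0 := by linarith [ht.2]
      exact div_nonpos_of_nonpos_of_nonneg (Odd.pow_nonpos (by decide) this) (by positivity)

theorem three_mul_sq_div_le_KL {a b : ℝ} (ha : 0 < a) (hb : 0 < b) :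
    3 * (a - b) ^ 2 / (2 * (a + 2 * b)) ≤ KL a b := by
  have h := sub_one_mul_div_le_log (div_pos ha hb)
  have hrw : (a / b - 1) * (5 * (a / b) + 1) / (2 * (a / b) * (a / b + 2))
      = (a - b) * (5 * a + b) / (2 * a * (a + 2 * b)) := by
    field_simp
  rw [hrw, div_le_iff₀ (by positivity)] at h
  rw [KL, div_le_iff₀ (by positivity)]
  nlinarith [h]

lemma min_sq_div_abs_le {a b : ℝ} (ha : 0 ≤ a) (hb : 0 < b) :
    min ((a - b) ^ 2 / (6 * b)) |a - b| ≤ 3 * (a - b) ^ 2 / (2 * (a + 2 * b)) := by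
  rcases le_total a (7 * b) with h | h
  · refine (min_le_left _ _).trans ?_
    rw [div_le_div_iff₀ (by positivity) (by positivity)]
    nlinarith [sq_nonneg (a - b)]
  · refine (min_le_right _ _).trans ?_
    rw [abs_of_nonneg (by linarith), le_div_iff₀ (by positivity)]
    nlinarith

theorem kl_lower_bound (a b : ℝ) (ha : 0 < a) (hb : 0 < b) :
    min ((a - b) ^ 2 / (6 * b)) |a - b| ≤ KL a b :=
  (min_sq_div_abs_le ha.le hb).trans (three_mul_sq_div_le_KL ha hb)
end

section
/- Let θ*, θ ∈ ℝ_{>0}^{m×L}, λ*, λ ∈ ℝ_{>0}^{n×K}, and probability matrices q^z ∈ [0,1]^{m×K} (rows summing to 1), q^w ∈ [0,1]^{n×L} (rows summing to 1), and 0-1 membership matrices 1^{z*}, 1^{w*} encoding true labels z*, w*. Define J̄(q^z, q^w, θ, λ) = −Σ_{i,j,k,l} q^z_{ik} q^w_{jl} θ_{il} λ_{jk} + Σ_{i,j} θ*_{i,w*(j)} λ*_{j,z*(i)} Σ_{k,l} q^z_{ik} q^w_{jl} log(θ_{il} λ_{jk}). Then J̄(1^{z*}, 1^{w*}, θ*,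 λ*) − J̄(q^z, q^w, θ, λ) = Σ_{k,l,k',l'} Σ_{i,j} 1^{z*}_{ik} 1^{w*}_{jl} q^z_{ik'} q^w_{jl'} · KL(θ*_{il} λ*_{jk}, θ_{il'} λ_{jk'}), where KL(a,b) = a log(a/b) − (a−b); in particular this difference is nonnegative. -/
noncomputable def Jbar {m n K L : ℕ} (zs : Fin m → Fin K) (ws : Fin n → Fin L)
    (θs : Fin m → Fin L → ℝ) (lams : Fin n → Fin K → ℝ)
    (qz : Fin m → Fin K → ℝ) (qw : Fin n → Fin L → ℝ)
    (θ : Fin m → Fin L → ℝ) (lam : Fin n → Fin K → ℝ) : ℝ :=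
  -(∑ i, ∑ j, ∑ k, ∑ l, qz i k * qw j l * (θ i l * lam j k))
    + ∑ i, ∑ j, θs i (ws j) * lams j (zs i) *
        (∑ k, ∑ l, qz i k * qw j l * Real.log (θ i l * lam j k))

def memb {m K : ℕ} (z : Fin m → Fin K) : Fin m → Fin K → ℝ :=
  fun i k => if z i = k then 1 else 0

lemma kl_nonneg (a b : ℝ) (ha : 0 < a) (hb : 0 < b) : 0 ≤ KL a b := by
  unfold KL
  have h := Real.log_le_sub_one_of_pos (show (0:ℝ) < b/a by positivity)
  have hlog : Real.log (b / a) = - Real.log (a / b) := by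
    rw [← Real.log_inv]; congr 1; field_simp
  rw [hlog] at h
  have h2 : a * (b/a - 1) = b - a := by field_simp
  nlinarith [mul_le_mul_of_nonneg_left h ha.le]

lemma sum_comm6 {a b c d e f : ℕ} (F : Fin a → Fin b → Fin c → Fin d → Fin e → Fin f → ℝ) :
    (∑ k, ∑ l, ∑ k', ∑ l', ∑ i, ∑ j, F k l k' l' i j)
    = ∑ i, ∑ j, ∑ k', ∑ l', ∑ l, ∑ k, F k l k' l' i j := by
  conv_lhs => enter [2,k]; enter [2,l]; enter [2,k']; rw [Finset.sum_comm]
  conv_lhs => enter [2,k]; enter [2,l]; rw [Finset.sum_comm]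
  conv_lhs => enter [2,k]; rw [Finset.sum_comm]
  rw [Finset.sum_comm]
  conv_lhs => enter [2,i]; enter [2,k]; enter [2,l]; enter [2,k']; rw [Finset.sum_comm]
  conv_lhs => enter [2,i]; enter [2,k]; enter [2,l]; rw [Finset.sum_comm]
  conv_lhs => enter [2,i]; enter [2,k]; rw [Finset.sum_comm]
  conv_lhs => enter [2,i]; rw [Finset.sum_comm]
  -- now order: i j k l k' l' ; want i j k' l' l k
  conv_lhs => enter [2,i]; enter [2,j]; enter [2,k]; rw [Finset.sum_comm]
  conv_lhs => enter [2,i]; enter [2,j]; rw [Finset.sum_comm]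
  conv_lhs => enter [2,i]; enter [2,j]; enter [2,k']; enter [2,k]; rw [Finset.sum_comm]
  conv_lhs => enter [2,i]; enter [2,j]; enter [2,k']; rw [Finset.sum_comm]
  conv_lhs => enter [2,i]; enter [2,j]; enter [2,k']; enter [2,l']; rw [Finset.sum_comm]

theorem jbar_difference (m n K L : ℕ) (zs : Fin m → Fin K) (ws : Fin n → Fin L)
    (θs θ : Fin m → Fin L → ℝ) (lams lam : Fin n → Fin K → ℝ)
    (hθs : ∀ i l, 0 < θs i l) (hθ : ∀ i l, 0 < θ i l)
    (hlams : ∀ j k, 0 < lams j k) (hlam : ∀ j k, 0 < lam j k)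
    (qz : Fin m → Fin K → ℝ) (qw : Fin n → Fin L → ℝ)
    (hqz0 : ∀ i k, 0 ≤ qz i k) (hqz1 : ∀ i, ∑ k, qz i k = 1)
    (hqw0 : ∀ j l, 0 ≤ qw j l) (hqw1 : ∀ j, ∑ l, qw j l = 1) :
    (Jbar zs ws θs lams (memb zs) (memb ws) θs lams - Jbar zs ws θs lams qz qw θ lam
      = ∑ k, ∑ l, ∑ k', ∑ l', ∑ i, ∑ j,
          memb zs i k * memb ws j l * qz i k' * qw j l' *
            KL (θs i l * lams j k) (θ i l' * lam j k')) ∧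
    0 ≤ Jbar zs ws θs lams (memb zs) (memb ws) θs lams - Jbar zs ws θs lams qz qw θ lam := by
  set A : Fin m → Fin n → ℝ := fun i j => θs i (ws j) * lams j (zs i) with hAdef
  have hApos : ∀ i j, 0 < A i j := fun i j => mul_pos (hθs _ _) (hlams _ _)
  have hbpos : ∀ i j (k : Fin K) (l : Fin L), 0 < θ i l * lam j k :=
    fun i j k l => mul_pos (hθ _ _) (hlam _ _)
  -- collapse membership double sums
  have hcol : ∀ (f : Fin m → Fin n → Fin K → Fin L → ℝ) i j,
      (∑ k, ∑ l, memb zs i k * memb ws j l * f i j k l) = f i j (zs i) (ws j) := by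
    intro f i j
    rw [Finset.sum_comm]
    simp [memb, ite_mul, zero_mul, one_mul, Finset.sum_ite_eq]
  -- RHS collapse
  have hRHS : (∑ k, ∑ l, ∑ k', ∑ l', ∑ i, ∑ j,
          memb zs i k * memb ws j l * qz i k' * qw j l' *
            KL (θs i l * lams j k) (θ i l' * lam j k'))
      = ∑ i, ∑ j, ∑ k, ∑ l, qz i k * qw j l * KL (A i j) (θ i l * lam j k) := by
    rw [sum_comm6]
    refine Finset.sum_congr rfl fun i _ => Finset.sum_congr rfl fun j _ => ?_
    refine Finset.sum_congr rfl fun k' _ => Finset.sum_congr rfl fun l' _ => ?_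
    simp [memb, ite_mul, zero_mul, one_mul, Finset.sum_ite_eq, hAdef]
  -- Jbar at the truth
  have hTrue : Jbar zs ws θs lams (memb zs) (memb ws) θs lams
      = -(∑ i, ∑ j, A i j) + ∑ i, ∑ j, A i j * Real.log (A i j) := by
    unfold Jbar
    congr 1
    · congr 1
      refine Finset.sum_congr rfl fun i _ => Finset.sum_congr rfl fun j _ => ?_
      exact hcol (fun i j k l => θs i l * lams j k) i j
    · refine Finset.sum_congr rfl fun i _ => Finset.sum_congr rfl fun j _ => ?_
      rw [hcol (fun i j k l => Real.log (θs i l * lams j k)) i j]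
  -- per-pair identity
  have hpair : ∀ i j, (∑ k, ∑ l, qz i k * qw j l * KL (A i j) (θ i l * lam j k))
      = (A i j * Real.log (A i j) - A i j)
        + (∑ k, ∑ l, qz i k * qw j l * (θ i l * lam j k))
        - A i j * (∑ k, ∑ l, qz i k * qw j l * Real.log (θ i l * lam j k)) := by
    intro i j
    have hqq : ∀ (c : ℝ), (∑ k, ∑ l, c * (qz i k * qw j l)) = c := by
      intro c
      have h1 : ∀ k : Fin K, (∑ l, c * (qz i k * qw j l)) = c * qz i k := by
        intro k
        rw [← Finset.mul_sum, ← Finset.mul_sum, hqw1, mul_one]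
      simp only [h1]
      rw [← Finset.mul_sum, hqz1, mul_one]
    have hpull : (∑ k, ∑ l, A i j * (qz i k * qw j l * Real.log (θ i l * lam j k)))
        = A i j * (∑ k, ∑ l, qz i k * qw j l * Real.log (θ i l * lam j k)) := by
      simp only [← Finset.mul_sum]
    calc (∑ k, ∑ l, qz i k * qw j l * KL (A i j) (θ i l * lam j k))
        = ∑ k, ∑ l, ((A i j * Real.log (A i j) - A i j) * (qz i k * qw j l)
            + qz i k * qw j l * (θ i l * lam j k)
            - A i j * (qz i k * qw j l * Real.log (θ i l * lam j k))) := by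
          refine Finset.sum_congr rfl fun k _ => Finset.sum_congr rfl fun l _ => ?_
          unfold KL
          rw [Real.log_div (hApos i j).ne' (hbpos i j k l).ne']
          ring
      _ = (∑ k, ∑ l, (A i j * Real.log (A i j) - A i j) * (qz i k * qw j l))
            + (∑ k, ∑ l, qz i k * qw j l * (θ i l * lam j k))
            - (∑ k, ∑ l, A i j * (qz i k * qw j l * Real.log (θ i l * lam j k))) := by
          simp only [Finset.sum_add_distrib, Finset.sum_sub_distrib]
      _ = _ := by rw [hqq, hpull]
  have key : Jbar zs ws θs lams (memb zs) (memb ws) θs lams - Jbar zs ws θs lams qz qw θ lam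
      = ∑ k, ∑ l, ∑ k', ∑ l', ∑ i, ∑ j,
          memb zs i k * memb ws j l * qz i k' * qw j l' *
            KL (θs i l * lams j k) (θ i l' * lam j k') := by
    rw [hRHS, hTrue]
    show _ - (-(∑ i, ∑ j, ∑ k, ∑ l, qz i k * qw j l * (θ i l * lam j k))
      + ∑ i, ∑ j, A i j * (∑ k, ∑ l, qz i k * qw j l * Real.log (θ i l * lam j k))) = _
    simp only [hpair]
    simp only [Finset.sum_add_distrib, Finset.sum_sub_distrib]
    ring
  refine ⟨key, ?_⟩
  rw [key]
  refine Finset.sum_nonneg fun k _ => Finset.sum_nonneg fun l _ =>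
    Finset.sum_nonneg fun k' _ => Finset.sum_nonneg fun l' _ =>
    Finset.sum_nonneg fun i _ => Finset.sum_nonneg fun j _ => ?_
  have hm : ∀ {p : Prop} [Decidable p], (0:ℝ) ≤ if p then 1 else 0 := by
    intro p _; split <;> norm_num
  refine mul_nonneg (mul_nonneg (mul_nonneg (mul_nonneg ?_ ?_) (hqz0 i k')) (hqw0 j l')) ?_
  · exact hm
  · exact hm
  · exact kl_nonneg _ _ (mul_pos (hθs _ _) (hlams _ _)) (mul_pos (hθ _ _) (hlam _ _))
end

section
/- In the setting of the population objective J̄ for the two-way node popularity model, if 1^z and 1^w are hard label assignments (0-1 row-stochastic matrices) then J̄(1^{z*}, 1^{w*}, θ*, λ*) − J̄(1^z, 1^w, θ, λ) = Σ_{i=1}^m Σ_{j=1}^n KL(θ*_{i,w*(j)} λ*_{j,z*(i)}, θ_{i,w(j)} λ_{j,z(i)}); consequently this difference equals zero if and only if θ*_{i,w*(j)} λ*_{j,z*(i)} = θ_{i,w(j)} λ_{j,z(i)} for all i, j. -/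
lemma memb_sum {K L : ℕ} (k0 : Fin K) (l0 : Fin L) (f : Fin K → Fin L → ℝ) :
    (∑ k, ∑ l, (if k0 = k then (1:ℝ) else 0) * (if l0 = l then (1:ℝ) else 0) * f k l)
      = f k0 l0 := by
  rw [Finset.sum_eq_single k0]
  · rw [Finset.sum_eq_single l0]
    · simp
    · intro b _ hb; simp [hb.symm]
    · simp
  · intro b _ hb
    simp [Ne.symm hb]
  · simp

lemma KL_nonneg {a b : ℝ} (ha : 0 < a) (hb : 0 < b) : 0 ≤ KL a b := by
  have h := Real.log_le_sub_one_of_pos (div_pos hb ha)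
  have : a * Real.log (b / a) ≤ a * (b / a - 1) :=
    mul_le_mul_of_nonneg_left h ha.le
  rw [Real.log_div hb.ne' ha.ne'] at this
  rw [KL, Real.log_div ha.ne' hb.ne']
  nlinarith [mul_div_cancel₀ b ha.ne']

lemma KL_eq_zero_iff {a b : ℝ} (ha : 0 < a) (hb : 0 < b) : KL a b = 0 ↔ a = b := by
  constructor
  · intro h
    by_contra hne
    have hba : b / a ≠ 1 := by
      intro hh
      exact hne (by field_simp at hh; linarith)
    have h2 := Real.log_lt_sub_one_of_pos (div_pos hb ha) hba
    have : a * Real.log (b / a) < a * (b / a - 1) :=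
      mul_lt_mul_of_pos_left h2 ha
    rw [Real.log_div hb.ne' ha.ne'] at this
    rw [KL, Real.log_div ha.ne' hb.ne'] at h
    have := mul_div_cancel₀ b ha.ne'
    nlinarith
  · intro h; subst h; simp [KL, div_self ha.ne']

theorem jbar_hard_difference (m n K L : ℕ)
    (zs z : Fin m → Fin K) (ws w : Fin n → Fin L)
    (θs θ : Fin m → Fin L → ℝ) (lams lam : Fin n → Fin K → ℝ)
    (hθs : ∀ i l, 0 < θs i l) (hθ : ∀ i l, 0 < θ i l)
    (hlams : ∀ j k, 0 < lams j k) (hlam : ∀ j k, 0 < lam j k) :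
    (Jbar zs ws θs lams (memb zs) (memb ws) θs lams
        - Jbar zs ws θs lams (memb z) (memb w) θ lam
      = ∑ i, ∑ j, KL (θs i (ws j) * lams j (zs i)) (θ i (w j) * lam j (z i))) ∧
    (Jbar zs ws θs lams (memb zs) (memb ws) θs lams
        - Jbar zs ws θs lams (memb z) (memb w) θ lam = 0
      ↔ ∀ i j, θs i (ws j) * lams j (zs i) = θ i (w j) * lam j (z i)) := by
  have key : ∀ (z' : Fin m → Fin K) (w' : Fin n → Fin L)
      (θ' : Fin m → Fin L → ℝ) (lam' : Fin n → Fin K → ℝ),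
      Jbar zs ws θs lams (memb z') (memb w') θ' lam'
        = -(∑ i, ∑ j, θ' i (w' j) * lam' j (z' i))
          + ∑ i, ∑ j, θs i (ws j) * lams j (zs i)
              * Real.log (θ' i (w' j) * lam' j (z' i)) := by
    intro z' w' θ' lam'
    unfold Jbar memb
    congr 1
    · congr 1
      apply Finset.sum_congr rfl; intro i _
      apply Finset.sum_congr rfl; intro j _
      exact memb_sum (z' i) (w' j) (fun k l => θ' i l * lam' j k)
    · apply Finset.sum_congr rfl; intro i _
      apply Finset.sum_congr rfl; intro j _
      rw [memb_sum (z' i) (w' j) (fun k l => Real.log (θ' i l * lam' j k))]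
  have hdiff : Jbar zs ws θs lams (memb zs) (memb ws) θs lams
        - Jbar zs ws θs lams (memb z) (memb w) θ lam
      = ∑ i, ∑ j, KL (θs i (ws j) * lams j (zs i)) (θ i (w j) * lam j (z i)) := by
    rw [key zs ws θs lams, key z w θ lam]
    have expand : ∀ i j, KL (θs i (ws j) * lams j (zs i)) (θ i (w j) * lam j (z i))
        = θs i (ws j) * lams j (zs i) * Real.log (θs i (ws j) * lams j (zs i))
          - θs i (ws j) * lams j (zs i) * Real.log (θ i (w j) * lam j (z i))
          - θs i (ws j) * lams j (zs i) + θ i (w j) * lam j (z i) := by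
      intro i j
      rw [KL, Real.log_div (mul_pos (hθs i (ws j)) (hlams j (zs i))).ne'
        (mul_pos (hθ i (w j)) (hlam j (z i))).ne']
      ring
    simp only [expand, Finset.sum_add_distrib, Finset.sum_sub_distrib]
    ring
  refine ⟨hdiff, ?_⟩
  rw [hdiff]
  have hnn : ∀ i ∈ Finset.univ, (0:ℝ) ≤
      ∑ j, KL (θs i (ws j) * lams j (zs i)) (θ i (w j) * lam j (z i)) := by
    intro i _
    exact Finset.sum_nonneg fun j _ => KL_nonneg
      (mul_pos (hθs i (ws j)) (hlams j (zs i))) (mul_pos (hθ i (w j)) (hlam j (z i)))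
  rw [Finset.sum_eq_zero_iff_of_nonneg hnn]
  constructor
  · intro h i j
    have hi := h i (Finset.mem_univ i)
    rw [Finset.sum_eq_zero_iff_of_nonneg (fun j _ => KL_nonneg
      (mul_pos (hθs i (ws j)) (hlams j (zs i))) (mul_pos (hθ i (w j)) (hlam j (z i))))] at hi
    exact (KL_eq_zero_iff (mul_pos (hθs i (ws j)) (hlams j (zs i)))
      (mul_pos (hθ i (w j)) (hlam j (z i)))).mp (hi j (Finset.mem_univ j))
  · intro h i _
    apply Finset.sum_eq_zero
    intro j _
    exact (KL_eq_zero_iff (mul_pos (hθs i (ws j)) (hlams j (zs i)))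
      (mul_pos (hθ i (w j)) (hlam j (z i)))).mpr (h i j)
end

section
/- Let q^z ∈ [0,1]^{m×K} be a row-stochastic matrix (each row sums to 1) and suppose the family I(q^z) of hard assignments z such that q^z_{i,z(i)} > 0 for all i satisfies: every z ∈ I(q^z) has zero misclustering rate relative to the truth z*, where all true classes are nonempty. If additionally the misclustering rate of q^z itself is positive (q^z is not equal, up to permutation, to the true membership matrix), then a contradiction arises; equivalently, if M_row(q^z) > 0 then there exists a hard assignment z̃ with q^z_{i,z̃(i)} > 0 for all i and M_row(1^{z̃}) > 0. -/
/-!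
If some hard assignment supported by `q` already misclusters, we are done. Otherwise every hard
selection `z` of the row supports of `q` is `σ ∘ zstar` for a label permutation `σ`. Moving one
coordinate of such a selection to another positive entry of its row gives another selection, whose
permutation agrees with the old one on all labels but the label of that coordinate (every class is
nonempty), hence everywhere. So each row of `q` has a single positive entry, `q` is the membership
matrix of a relabelling of `zstar`, and its misclustering rate is `0`.
-/

noncomputable def MrowSoft {m K : ℕ} (zstar : Fin m → Fin K)
    (q : Fin m → Fin K → ℝ) : ℝ :=
  Finset.univ.inf' ⟨Equiv.refl (Fin K), Finset.mem_univ _⟩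
    (fun s : Equiv.Perm (Fin K) =>
      1 - ∑ k', (1 / (m : ℝ)) * ∑ i, (if zstar i = s k' then (1 : ℝ) else 0) * q i k')

open Finset

theorem Equiv.Perm.eq_of_forall_ne_apply_eq {α : Type*} {σ τ : Equiv.Perm α} {a : α}
    (h : ∀ b, b ≠ a → σ b = τ b) : σ = τ := by
  ext b
  rcases ne_or_eq b a with hb | rfl
  · exact h b hb
  by_contra hne
  have hc : σ.symm (τ b) ≠ b := fun hcb => hne (σ.symm_apply_eq.1 hcb).symm
  refine hc (τ.injective ?_)
  rw [← h _ hc, Equiv.apply_symm_apply]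

section Relabelling

variable {ι κ : Type*}

def IsRelabelling (zstar z : ι → κ) : Prop :=
  ∃ σ : Equiv.Perm κ, ∀ i, z i = σ (zstar i)

theorem eq_of_forall_selection_isRelabelling [DecidableEq ι] {zstar : ι → κ}
    (hzstar : Function.Surjective zstar) {S : ι → κ → Prop}
    (hsel : ∀ z : ι → κ, (∀ i, S i (z i)) → IsRelabelling zstar z)
    {z₀ : ι → κ} (hz₀ : ∀ i, S i (z₀ i)) {i : ι} {k : κ} (hk : S i k) : k = z₀ i := by
  obtain ⟨σ₀, hσ₀⟩ := hsel z₀ hz₀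
  obtain ⟨σ₁, hσ₁⟩ := hsel (Function.update z₀ i k) fun j => by
    rcases eq_or_ne j i with rfl | hj
    · simpa using hk
    · simpa [hj] using hz₀ j
  have hσ : σ₁ = σ₀ := Equiv.Perm.eq_of_forall_ne_apply_eq (a := zstar i) fun c hc => by
    obtain ⟨j, rfl⟩ := hzstar c
    have hj : j ≠ i := by rintro rfl; exact hc rfl
    rw [← hσ₀, ← hσ₁, Function.update_of_ne hj]
  calc k = σ₁ (zstar i) := by simpa using hσ₁ i
    _ = z₀ i := by rw [hσ, hσ₀]

end Relabelling

theorem eq_one_of_sum_eq_one_of_pos_imp_eq {κ : Type*} [Fintype κ] {p : κ → ℝ}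
    (h0 : ∀ k, 0 ≤ p k) (h1 : ∑ k, p k = 1) {k₀ : κ} (hsupp : ∀ k, 0 < p k → k = k₀) :
    p k₀ = 1 := by
  rw [← h1, sum_eq_single k₀ (fun k _ hk => ?_) (by simp)]
  exact ((h0 k).eq_or_lt.resolve_right fun hpos => hk (hsupp k hpos)).symm

section Misclustering

variable {m K : ℕ} (zstar : Fin m → Fin K)

theorem sum_confusion_perm_eq (q : Fin m → Fin K → ℝ) (s : Equiv.Perm (Fin K)) :
    ∑ k', (1 / (m : ℝ)) * ∑ i, (if zstar i = s k' then (1 : ℝ) else 0) * q i k'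
      = (∑ i, q i (s.symm (zstar i))) / m := by
  rw [← mul_sum, sum_comm, one_div, inv_mul_eq_div]
  congr 1
  refine sum_congr rfl fun i _ => ?_
  rw [sum_eq_single (s.symm (zstar i)) (fun k _ hk => ?_) (by simp)]
  · simp
  · rw [if_neg (fun h => hk (by rw [h, Equiv.symm_apply_apply])), zero_mul]

theorem mrowSoft_pos_iff (hm : 0 < m) (q : Fin m → Fin K → ℝ) :
    0 < MrowSoft zstar q ↔ ∀ σ : Equiv.Perm (Fin K), ∑ i, q i (σ (zstar i)) < m := by
  have hm' : (0 : ℝ) < m := by exact_mod_cast hm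
  refine (lt_inf'_iff _).trans ?_
  simp only [mem_univ, true_implies, sum_confusion_perm_eq, sub_pos, div_lt_one hm']
  exact ⟨fun h σ => by simpa using h σ.symm, fun h s => h s.symm⟩

theorem isRelabelling_of_mrowSoft_hard_nonpos (hm : 0 < m) (z : Fin m → Fin K)
    (h : MrowSoft zstar (fun i k => if z i = k then 1 else 0) ≤ 0) : IsRelabelling zstar z := by
  rw [← not_lt, mrowSoft_pos_iff zstar hm] at h
  obtain ⟨σ, hσ⟩ := not_forall.1 h
  refine ⟨σ, fun i => ?_⟩
  have hle : ∀ j ∈ univ, (if z j = σ (zstar j) then (1 : ℝ) else 0) ≤ 1 := fun j _ => by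
    split_ifs <;> norm_num
  have hsum := le_antisymm (sum_le_sum hle) (by simpa using not_lt.1 hσ)
  have hall := (sum_eq_sum_iff_of_le hle).1 hsum
  by_contra hne
  simpa [hne] using hall i (mem_univ i)

end Misclustering

theorem exists_hard_with_positive_misclustering (m K : ℕ) (hm : 0 < m)
    (zstar : Fin m → Fin K) (hne : ∀ k, ∃ i, zstar i = k)
    (q : Fin m → Fin K → ℝ) (hq0 : ∀ i k, 0 ≤ q i k) (hq1 : ∀ i, ∑ k, q i k = 1)
    (hpos : 0 < MrowSoft zstar q) :
    ∃ zt : Fin m → Fin K, (∀ i, 0 < q i (zt i)) ∧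
      0 < MrowSoft zstar (fun i k => if zt i = k then 1 else 0) := by
  by_contra! hcon
  have hsel : ∀ z : Fin m → Fin K, (∀ i, 0 < q i (z i)) → IsRelabelling zstar z :=
    fun z hz => isRelabelling_of_mrowSoft_hard_nonpos zstar hm z (hcon z hz)
  have hrow : ∀ i, ∃ k, 0 < q i k := fun i => by
    simpa using exists_lt_of_sum_lt (s := univ) (f := 0) (g := q i) (by simp [hq1 i])
  choose z₀ hz₀ using hrow
  obtain ⟨σ, hσ⟩ := hsel z₀ hz₀
  have hone : ∀ i, q i (σ (zstar i)) = 1 := fun i => hσ i ▸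
    eq_one_of_sum_eq_one_of_pos_imp_eq (hq0 i) (hq1 i)
      fun _ hk => eq_of_forall_selection_isRelabelling (S := fun i k => 0 < q i k) hne hsel hz₀ hk
  simpa [hone] using (mrowSoft_pos_iff zstar hm q).1 hpos σ
end

section
/- Fix μ > 0 and the truncated norm ‖x‖_new = sqrt(Σᵢ min(|xᵢ|,6μ)²) on finite-dimensional real vectors. Let η_min, η_max > 0 with η_min ≤ η_max, let λ₁, λ₂, λ' be vectors (of compatible block decompositions indexed by l' = 1..L), and suppose there exist c₁,…,c_L and d₁,…,d_L in [η_min/η_max, η_max/η_min] such that Σ_{l'} ‖λ₁^{(l')} − c_{l'} λ'^{(l')}‖²_new < ε and Σ_{l'} ‖λ₂^{(l')} − d_{l'} λ'^{(l')}‖²_new < ε with ε = (η_min⁴ / (2(η_min⁴ + η_max⁴)))·τ·B. Then Σ_{l'} ‖λ₁^{(l')} − (c_{l'}/d_{l'}) λ₂^{(l')}‖²_new < τ·B, and each ratio c_{l'}/d_{l'} lies in [η_min²/η_max², η_max²/η_min²]. -/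
noncomputable def normNew (μ : ℝ) {d : ℕ} (x : Fin d → ℝ) : ℝ :=
  Real.sqrt (∑ i, (min |x i| (6 * μ)) ^ 2)

lemma sqrt_sum_sq_triangle {n : ℕ} (u v : Fin n → ℝ) :
    Real.sqrt (∑ i, (u i + v i)^2) ≤ Real.sqrt (∑ i, (u i)^2) + Real.sqrt (∑ i, (v i)^2) := by
  have h := norm_add_le ((WithLp.equiv 2 (Fin n → ℝ)).symm u) ((WithLp.equiv 2 (Fin n → ℝ)).symm v)
  simpa [EuclideanSpace.norm_eq, Real.norm_eq_abs, sq_abs] using h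

lemma sqrt_sum_sq_mono {n : ℕ} (u v : Fin n → ℝ) (h : ∀ i, |u i| ≤ v i) :
    Real.sqrt (∑ i, (u i)^2) ≤ Real.sqrt (∑ i, (v i)^2) := by
  apply Real.sqrt_le_sqrt
  apply Finset.sum_le_sum
  intro i _
  calc (u i)^2 = |u i|^2 := (sq_abs _).symm
  _ ≤ (v i)^2 := by
    apply pow_le_pow_left₀ (abs_nonneg _) (h i)

lemma normNew_nonneg (μ : ℝ) {n : ℕ} (x : Fin n → ℝ) : 0 ≤ normNew μ x :=
  Real.sqrt_nonneg _

lemma normNew_triangle (μ : ℝ) (hμ : 0 ≤ μ) {n : ℕ} (u v : Fin n → ℝ) :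
    normNew μ (fun i => u i + v i) ≤ normNew μ u + normNew μ v := by
  have hM : (0:ℝ) ≤ 6 * μ := by linarith
  unfold normNew
  calc Real.sqrt (∑ i, (min |u i + v i| (6*μ))^2)
      ≤ Real.sqrt (∑ i, (min |u i| (6*μ) + min |v i| (6*μ))^2) := by
        apply sqrt_sum_sq_mono
        intro i
        rw [abs_of_nonneg (le_min (abs_nonneg _) hM)]
        rcases le_total |u i| (6*μ) with h | h
        · rcases le_total |v i| (6*μ) with h' | h'
          · rw [min_eq_left h, min_eq_left h']
            exact le_trans (min_le_left _ _) (abs_add_le _ _)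
          · rw [min_eq_right h']
            have := min_le_right |u i + v i| (6*μ)
            linarith [le_min (abs_nonneg (u i)) hM]
        · rw [min_eq_right h]
          have := min_le_right |u i + v i| (6*μ)
          linarith [le_min (abs_nonneg (v i)) hM]
  _ ≤ _ := sqrt_sum_sq_triangle _ _

lemma normNew_smul (μ : ℝ) (hμ : 0 ≤ μ) {n : ℕ} (k : ℝ) (x : Fin n → ℝ) :
    normNew μ (fun i => k * x i) ≤ max |k| 1 * normNew μ x := by
  have hM : (0:ℝ) ≤ 6 * μ := by linarith
  set m := max |k| 1 with hm
  have hm1 : (1:ℝ) ≤ m := le_max_right _ _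
  have hm0 : (0:ℝ) ≤ m := by linarith
  have hk : |k| ≤ m := le_max_left _ _
  unfold normNew
  have key : ∀ i, min |k * x i| (6*μ) ≤ m * min |x i| (6*μ) := by
    intro i
    rcases le_total |x i| (6*μ) with h | h
    · rw [min_eq_left h]
      calc min |k * x i| (6*μ) ≤ |k * x i| := min_le_left _ _
      _ = |k| * |x i| := abs_mul _ _
      _ ≤ m * |x i| := mul_le_mul_of_nonneg_right hk (abs_nonneg _)
    · rw [min_eq_right h]
      calc min |k * x i| (6*μ) ≤ 6*μ := min_le_right _ _
      _ = 1 * (6*μ) := (one_mul _).symm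
      _ ≤ m * (6*μ) := mul_le_mul_of_nonneg_right hm1 hM
  calc Real.sqrt (∑ i, (min |k * x i| (6*μ))^2)
      ≤ Real.sqrt (∑ i, (m * min |x i| (6*μ))^2) := by
        apply sqrt_sum_sq_mono
        intro i
        rw [abs_of_nonneg (le_min (abs_nonneg _) hM)]
        exact key i
  _ = m * Real.sqrt (∑ i, (min |x i| (6*μ))^2) := by
        rw [← Real.sqrt_sq hm0, ← Real.sqrt_mul (sq_nonneg m), Finset.mul_sum]
        congr 1
        apply Finset.sum_congr rfl
        intro i _
        rw [mul_pow, Real.sq_sqrt (sq_nonneg m)]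

lemma normNew_neg (μ : ℝ) {n : ℕ} (x : Fin n → ℝ) :
    normNew μ (fun i => -(x i)) = normNew μ x := by
  unfold normNew
  simp [abs_neg]

theorem at_most_one_nearby (μ : ℝ) (hμ : 0 < μ) (L : ℕ) (dim : Fin L → ℕ)
    (ηmin ηmax τ B : ℝ) (h0 : 0 < ηmin) (h1 : ηmin ≤ ηmax) (hτ : 0 < τ) (hB : 0 < B)
    (lam1 lam2 lamP : (l : Fin L) → Fin (dim l) → ℝ)
    (c d : Fin L → ℝ)
    (hc : ∀ l, c l ∈ Set.Icc (ηmin / ηmax) (ηmax / ηmin))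
    (hd : ∀ l, d l ∈ Set.Icc (ηmin / ηmax) (ηmax / ηmin))
    (hclose1 : ∑ l, (normNew μ (fun i => lam1 l i - c l * lamP l i)) ^ 2
        < ηmin ^ 4 / (2 * (ηmin ^ 4 + ηmax ^ 4)) * τ * B)
    (hclose2 : ∑ l, (normNew μ (fun i => lam2 l i - d l * lamP l i)) ^ 2
        < ηmin ^ 4 / (2 * (ηmin ^ 4 + ηmax ^ 4)) * τ * B) :
    (∑ l, (normNew μ (fun i => lam1 l i - (c l / d l) * lam2 l i)) ^ 2 < τ * B) ∧
    ∀ l, c l / d l ∈ Set.Icc (ηmin ^ 2 / ηmax ^ 2) (ηmax ^ 2 / ηmin ^ 2) := by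
  have hmax0 : 0 < ηmax := lt_of_lt_of_le h0 h1
  have hr0 : 0 < ηmin / ηmax := div_pos h0 hmax0
  have hs0 : 0 < ηmax / ηmin := div_pos hmax0 h0
  have hdpos : ∀ l, 0 < d l := fun l => lt_of_lt_of_le hr0 (hd l).1
  have hcpos : ∀ l, 0 < c l := fun l => lt_of_lt_of_le hr0 (hc l).1
  set R : ℝ := ηmax ^ 2 / ηmin ^ 2 with hR
  have hR1 : (1:ℝ) ≤ R := by
    rw [hR, le_div_iff₀ (by positivity)]
    nlinarith
  have hratio : ∀ l, c l / d l ∈ Set.Icc (ηmin ^ 2 / ηmax ^ 2) (ηmax ^ 2 / ηmin ^ 2) := by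
    intro l
    constructor
    · rw [div_le_div_iff₀ (by positivity) (hdpos l)]
      have h2 := (hc l).1
      have h3 := (hd l).2
      rw [div_le_iff₀ hmax0] at h2
      rw [le_div_iff₀ h0] at h3
      nlinarith [hdpos l, hcpos l]
    · rw [div_le_div_iff₀ (hdpos l) (by positivity)]
      have h2 := (hc l).2
      have h3 := (hd l).1
      rw [le_div_iff₀ h0] at h2
      rw [div_le_iff₀ hmax0] at h3
      nlinarith [hdpos l, hcpos l, mul_le_mul_of_nonneg_right h2 h0.le,
        mul_le_mul_of_nonneg_right h3 hmax0.le]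
  refine ⟨?_, hratio⟩
  set ε : ℝ := ηmin ^ 4 / (2 * (ηmin ^ 4 + ηmax ^ 4)) * τ * B with hε
  -- per-block bound
  have key : ∀ l, (normNew μ (fun i => lam1 l i - (c l / d l) * lam2 l i))^2
      ≤ 2 * (normNew μ (fun i => lam1 l i - c l * lamP l i))^2
        + 2 * R^2 * (normNew μ (fun i => lam2 l i - d l * lamP l i))^2 := by
    intro l
    set a := normNew μ (fun i => lam1 l i - c l * lamP l i) with ha
    set b := normNew μ (fun i => lam2 l i - d l * lamP l i) with hb
    have ha0 : 0 ≤ a := normNew_nonneg _ _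
    have hb0 : 0 ≤ b := normNew_nonneg _ _
    have hbound : normNew μ (fun i => lam1 l i - (c l / d l) * lam2 l i) ≤ a + R * b := by
      have hid : (fun i => lam1 l i - (c l / d l) * lam2 l i)
          = fun i => (lam1 l i - c l * lamP l i)
            + (c l / d l) * (-(lam2 l i - d l * lamP l i)) := by
        have hdne : d l ≠ 0 := (hdpos l).ne'
        funext i
        field_simp
        ring
      rw [hid]
      calc normNew μ (fun i => (lam1 l i - c l * lamP l i)
            + (c l / d l) * (-(lam2 l i - d l * lamP l i)))
          ≤ a + normNew μ (fun i => (c l / d l) * (-(lam2 l i - d l * lamP l i))) :=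
            normNew_triangle μ hμ.le _ _
      _ ≤ a + max |c l / d l| 1 * normNew μ (fun i => -(lam2 l i - d l * lamP l i)) := by
            have := normNew_smul μ hμ.le (c l / d l) (fun i => -(lam2 l i - d l * lamP l i))
            linarith
      _ ≤ a + R * b := by
            rw [normNew_neg]
            have hmax : max |c l / d l| 1 ≤ R := by
              apply max_le _ hR1
              rw [abs_of_pos (div_pos (hcpos l) (hdpos l))]
              exact (hratio l).2
            have := mul_le_mul_of_nonneg_right hmax hb0
            linarith
    have hn0 : 0 ≤ normNew μ (fun i => lam1 l i - (c l / d l) * lam2 l i) :=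
      normNew_nonneg _ _
    nlinarith [sq_nonneg (a - R * b), mul_nonneg (mul_nonneg (by linarith : (0:ℝ) ≤ R) hb0) ha0]
  have hsum : ∑ l, (normNew μ (fun i => lam1 l i - (c l / d l) * lam2 l i))^2
      ≤ 2 * (∑ l, (normNew μ (fun i => lam1 l i - c l * lamP l i))^2)
        + 2 * R^2 * (∑ l, (normNew μ (fun i => lam2 l i - d l * lamP l i))^2) := by
    rw [Finset.mul_sum, Finset.mul_sum, ← Finset.sum_add_distrib]
    exact Finset.sum_le_sum fun l _ => key l
  have hfinal : 2 * ε + 2 * R^2 * ε = τ * B := by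
    rw [hε, hR]
    field_simp
  have hR2 : 0 < R^2 := by positivity
  calc ∑ l, (normNew μ (fun i => lam1 l i - (c l / d l) * lam2 l i))^2
      ≤ _ := hsum
  _ < 2 * ε + 2 * R^2 * ε := by nlinarith
  _ = τ * B := hfinal
end
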